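/- arXiv:1602.02407 — 2 statements merged into one kernel-verified Lean document; each statement's English description precedes it below -/
import Mathlib

section
/- Let p be a prime and let n ∈ M_p^(2). If q is a prime with q < p and q | n, then q ∈ {2, 3, 7, 43}. -/
/-!
Let `q < p` be a prime dividing `n`. Since `S n n ≡ p (mod n)` and `q ≠ p`, `q ∤ S n n`.
Summing over complete residue systems, `S n n ≡ (n / q) · ∑_{x ∈ 𝔽_q} x ^ n (mod q)`, and the
power sum over `𝔽_q` vanishes unless `q - 1 ∣ n`, in which case it is `-1`. Hence `q - 1 ∣ n`
and `q² ∤ n`. Every prime factor `r` of `q - 1` is then again a prime `r < p` dividing `n`, so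
`q - 1` is squarefree, and by strong induction all its prime factors lie in `{2, 3, 7, 43}`.
Thus `q - 1 ∣ 2 · 3 · 7 · 43 = 1806`, and the only primes `q` with this property are
`2, 3, 7, 43`.
-/

/-- `S k n = ∑_{i=1}^{n} i^k`. -/
def S (k n : ℕ) : ℕ := ∑ i ∈ Finset.Icc 1 n, i ^ k

open Finset

theorem FiniteField.sum_pow_of_ne_zero {K : Type*} [Field K] [Fintype K] {i : ℕ} (hi : i ≠ 0) :
    ∑ x : K, x ^ i = if Fintype.card K - 1 ∣ i then -1 else 0 := by
  classical
  calc ∑ x : K, x ^ i = ∑ x ∈ univ.erase 0, x ^ i := (sum_erase univ (zero_pow hi)).symm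
    _ = ∑ x : {a : K // a ≠ 0}, (x : K) ^ i := sum_subtype _ (by simp) _
    _ = ∑ x : Kˣ, (x : K) ^ i := Fintype.sum_equiv unitsEquivNeZero.symm _ _ fun _ => rfl
    _ = _ := FiniteField.sum_pow_units K i

namespace ZMod

variable {M : Type*} [AddCommMonoid M] {q : ℕ} [NeZero q]

theorem sum_range_natCast (f : ZMod q → M) : ∑ j ∈ range q, f j = ∑ x, f x :=
  sum_nbij' (fun j => j) val (by simp) (by simp [val_lt])
    (fun _ hj => by simpa using val_cast_of_lt (mem_range.1 hj)) (by simp) (by simp)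

theorem sum_range_mul_natCast (m : ℕ) (f : ZMod q → M) :
    ∑ j ∈ range (q * m), f j = m • ∑ x, f x := by
  induction m with
  | zero => simp
  | succ m ih =>
    simp only [mul_add_one, sum_range_add, ih, succ_nsmul, Nat.cast_add, Nat.cast_mul,
      natCast_self, zero_mul, zero_add, sum_range_natCast]

end ZMod

theorem S_eq_sum_range (k n : ℕ) : S k n = ∑ j ∈ range n, (j + 1) ^ k := by
  rw [S, range_eq_Ico, ← Ico_add_one_right_eq_Icc, sum_Ico_add' (fun j => j ^ k) 0 n 1]

theorem natCast_S_mul (q k m : ℕ) [NeZero q] :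
    (S k (q * m) : ZMod q) = m * ∑ x : ZMod q, x ^ k := by
  rw [S_eq_sum_range]
  push_cast
  rw [ZMod.sum_range_mul_natCast m (fun x => (x + 1) ^ k), nsmul_eq_mul,
    Fintype.sum_equiv (Equiv.addRight 1) (fun x => (x + 1) ^ k) (· ^ k) fun _ => rfl]

theorem sub_one_dvd_and_not_sq_dvd_of_not_dvd_S {q n : ℕ} (hq : q.Prime) (hqn : q ∣ n)
    (hS : ¬ q ∣ S n n) : q - 1 ∣ n ∧ ¬ q ^ 2 ∣ n := by
  have : Fact q.Prime := ⟨hq⟩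
  obtain ⟨m, rfl⟩ := hqn
  have hm : m ≠ 0 := by rintro rfl; exact hS (by simp [S])
  rw [← ZMod.natCast_eq_zero_iff, natCast_S_mul,
    FiniteField.sum_pow_of_ne_zero (mul_ne_zero hq.ne_zero hm), ZMod.card] at hS
  split_ifs at hS with hdvd
  · refine ⟨hdvd, fun hsq => hS ?_⟩
    rw [pow_two, Nat.mul_dvd_mul_iff_left hq.pos, ← ZMod.natCast_eq_zero_iff] at hsq
    simp [hsq]
  · simp at hS

theorem mem_of_prime_of_sub_one_dvd {q : ℕ} (hq : q.Prime) (h : q - 1 ∣ 2 * 3 * 7 * 43) :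
    q ∈ ({2, 3, 7, 43} : Set ℕ) := by
  obtain ⟨d, rfl⟩ : ∃ d, q = d + 1 := ⟨q - 1, by have := hq.two_le; omega⟩
  have hd : d ∈ Nat.divisors 1806 := Nat.mem_divisors.2 ⟨by simpa using h, by norm_num⟩
  simp only [Nat.divisors_ofNat, mem_insert, mem_singleton] at hd
  rcases hd with rfl | rfl | rfl | rfl | rfl | rfl | rfl | rfl | rfl | rfl | rfl | rfl | rfl |
    rfl | rfl | rfl <;> revert hq <;> norm_num

theorem subset_of_squarefree_sub_one {s : Set ℕ} (hprime : ∀ q ∈ s, q.Prime)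
    (hsqfree : ∀ q ∈ s, Squarefree (q - 1))
    (hclosed : ∀ q ∈ s, ∀ r, r.Prime → r ∣ q - 1 → r ∈ s) :
    s ⊆ {2, 3, 7, 43} := by
  intro q hq
  induction q using Nat.strong_induction_on with
  | _ q ih =>
    have hfactors : (q - 1).primeFactors ⊆ {2, 3, 7, 43} := by
      intro r hr
      obtain ⟨hr, hrq, -⟩ := Nat.mem_primeFactors.1 hr
      have hrle : r ≤ q - 1 := Nat.le_of_dvd (Nat.sub_pos_of_lt (hprime q hq).one_lt) hrq
      simpa using ih r (Nat.lt_of_le_sub_one (hprime q hq).pos hrle) (hclosed q hq r hr hrq)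
    apply mem_of_prime_of_sub_one_dvd (hprime q hq)
    rw [← Nat.prod_primeFactors_of_squarefree (hsqfree q hq)]
    exact (prod_dvd_prod_of_subset _ _ id hfactors).trans (by decide)

theorem stmt_6_general (p : ℕ) (hp : p.Prime) (n : ℕ)
    (h : S n n ≡ p [MOD n])
    (q : ℕ) (hq : q.Prime) (hqp : q < p) (hqn : q ∣ n) :
    q ∈ ({2, 3, 7, 43} : Set ℕ) := by
  set s := {r : ℕ | r.Prime ∧ r < p ∧ r ∣ n}
  have hkey : ∀ r ∈ s, r - 1 ∣ n ∧ ¬ r ^ 2 ∣ n := fun r ⟨hr, hrp, hrn⟩ =>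
    sub_one_dvd_and_not_sq_dvd_of_not_dvd_S hr hrn fun hrS =>
      hrp.ne ((Nat.prime_dvd_prime_iff_eq hr hp).1 ((h.dvd_iff hrn).1 hrS))
  have hclosed : ∀ t ∈ s, ∀ r, r.Prime → r ∣ t - 1 → r ∈ s := by
    rintro t ⟨ht, htp, htn⟩ r hr hrt
    have hrle : r ≤ t - 1 := Nat.le_of_dvd (Nat.sub_pos_of_lt ht.one_lt) hrt
    exact ⟨hr, by omega, hrt.trans (hkey t ⟨ht, htp, htn⟩).1⟩
  have hsqfree : ∀ t ∈ s, Squarefree (t - 1) := fun t hts =>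
    Nat.squarefree_iff_prime_squarefree.2 fun r hr hrr =>
      (hkey r (hclosed t hts r hr (dvd_of_mul_left_dvd hrr))).2
        ((pow_two r ▸ hrr).trans (hkey t hts).1)
  exact subset_of_squarefree_sub_one (fun r hr => hr.1) hsqfree hclosed ⟨hq, hqp, hqn⟩

/-- If `n ∈ M_p^(2)` and `q` is a prime with `q < p` and `q ∣ n`, then `q ∈ {2, 3, 7, 43}`. -/
theorem stmt_6 (p : ℕ) (hp : p.Prime) (n : ℕ) (hn : 0 < n)
    (h : S n n ≡ p [MOD n]) (h2 : p ^ 2 ∣ n) (h3 : ¬ p ^ 3 ∣ n)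
    (q : ℕ) (hq : q.Prime) (hqp : q < p) (hqn : q ∣ n) :
    q ∈ ({2, 3, 7, 43} : Set ℕ) :=
  stmt_6_general p hp n h q hq hqp hqn
end

section
/- Let p be a prime. Then M_p ⊆ {1, 2, 6, 42, 1806} ∪ p · 𝒲; that is, every positive integer n with S_n(n) ≡ p (mod n) either belongs to {1, 2, 6, 42, 1806}, or is divisible by p with n/p a weak primary pseudoperfect number. -/
/-- The set `𝒲` of weak primary pseudoperfect numbers: positive integers `n` with
`∑_{p ∣ n, p prime} n/p + 1 ≡ 0 (mod n)`. -/
def W : Set ℕ := {n : ℕ | 0 < n ∧ n ∣ (∑ q ∈ n.primeFactors, n / q) + 1}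

/-!
Modulo a prime power `ℓ ^ a ∣ n`, periodicity gives
`S n n ≡ (n / ℓ ^ a) • ∑ x : ZMod (ℓ ^ a), x ^ n`. Nonunits are nilpotent of index `a ≤ n`, so
only units contribute; their `n`-th powers sum to `φ(ℓ ^ a)` when `(ℓ - 1) ∣ n` (then
`φ(ℓ ^ a) ∣ n`), and to `0` otherwise (multiply by a unit `c` with `c ^ n - 1` a unit). Hence
`S n n ≡ -∑_{q ∣ n prime, (q - 1) ∣ n} n / q (mod n)`.

If `S n n ≡ p (mod n)`, reading `n ∣ p + ∑ …` modulo `q` and `q ^ 2` shows that every prime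
`q ≠ p` dividing `n` has `(q - 1) ∣ n`. When `p ∤ n`, `n` is also squarefree, its primes form
the chain `2, 3, 7, 43`, and `n ∣ 1806`. When `p ∣ n`, the primes `q ∣ n` with `(q - 1) ∣ n`
are exactly the primes dividing `m = n / p`, and the congruence becomes
`m ∣ 1 + ∑_{q ∣ m} m / q`.
-/

open Finset

theorem Function.Periodic.sum_range_mul {R : Type*} [AddCommMonoid R] {f : ℕ → R} {M : ℕ}
    (hf : Function.Periodic f M) (c : ℕ) :
    ∑ i ∈ range (c * M), f i = c • ∑ i ∈ range M, f i := by
  induction c with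
  | zero => simp
  | succ c ih =>
    rw [add_mul, one_mul, sum_range_add, ih, succ_nsmul]
    congr 1
    exact sum_congr rfl fun i _ => by simpa [add_comm] using hf.nat_mul c i

theorem ZMod.sum_range_natCast_s13 {R : Type*} [AddCommMonoid R] (M : ℕ) [NeZero M]
    (f : ZMod M → R) :
    ∑ i ∈ range M, f i = ∑ x : ZMod M, f x := by
  refine sum_nbij (↑) (fun _ _ => mem_univ _) ?_ ?_ (fun _ _ => rfl)
  · intro i hi j hj hij
    simpa [Nat.mod_eq_of_lt (mem_range.1 hi), Nat.mod_eq_of_lt (mem_range.1 hj)] using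
      (ZMod.natCast_eq_natCast_iff' i j M).1 hij
  · intro x _
    exact ⟨x.val, mem_coe.2 (mem_range.2 (ZMod.val_lt x)), ZMod.natCast_zmod_val x⟩

theorem natCast_S_of_dvd (k : ℕ) {M N : ℕ} [NeZero M] (h : M ∣ N) :
    (S k N : ZMod M) = (N / M) • ∑ x : ZMod M, x ^ k := by
  obtain ⟨c, rfl⟩ := h
  have hper : Function.Periodic (fun i : ℕ => ((i : ZMod M) + 1) ^ k) M := fun i => by simp
  rw [Nat.mul_div_cancel_left _ (Nat.pos_of_neZero M), S, Nat.cast_sum,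
    ← Ico_add_one_right_eq_Icc, sum_Ico_eq_sum_range, Nat.add_sub_cancel, mul_comm]
  simp only [Nat.cast_pow, Nat.cast_add, Nat.cast_one, add_comm 1]
  rw [hper.sum_range_mul, ZMod.sum_range_natCast_s13 M (fun x => (x + 1) ^ k)]
  exact congrArg _ (Fintype.sum_equiv (Equiv.addRight 1) _ _ fun _ => rfl)

theorem sum_units_pow_eq_zero_of_isUnit_pow_sub_one {R : Type*} [CommRing R] [Fintype Rˣ]
    {k : ℕ} (c : Rˣ) (hc : IsUnit ((c : R) ^ k - 1)) : ∑ u : Rˣ, (u : R) ^ k = 0 := by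
  have hfix : (c : R) ^ k * ∑ u : Rˣ, (u : R) ^ k = ∑ u : Rˣ, (u : R) ^ k := by
    rw [mul_sum]
    exact Fintype.sum_equiv (Equiv.mulLeft c) _ _ fun u => by simp [mul_pow]
  exact (hc.mul_right_eq_zero).1 (by rw [sub_mul, hfix, one_mul, sub_self])

theorem sum_pow_eq_sum_units_pow {R : Type*} [CommRing R] [Fintype R] [Fintype Rˣ] {k : ℕ}
    (h : ∀ x : R, ¬IsUnit x → x ^ k = 0) : ∑ x : R, x ^ k = ∑ u : Rˣ, (u : R) ^ k := by
  refine (sum_subset (subset_univ _) fun x _ hx => h x fun hu => hx ?_).symm.trans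
    (sum_map univ ⟨((↑) : Rˣ → R), Units.val_injective⟩ (· ^ k))
  exact mem_map.2 ⟨hu.unit, mem_univ _, rfl⟩

theorem ZMod.sum_units_pow_of_totient_dvd {M k : ℕ} [NeZero M] (h : M.totient ∣ k) :
    ∑ u : (ZMod M)ˣ, (u : ZMod M) ^ k = M.totient := by
  obtain ⟨t, rfl⟩ := h
  simp [pow_mul, ← Units.val_pow_eq_pow_val, ZMod.pow_totient, ZMod.card_units_eq_totient]

theorem ZMod.isUnit_iff_castHom_ne_zero {ℓ a : ℕ} [Fact ℓ.Prime] (ha : 0 < a)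
    (x : ZMod (ℓ ^ a)) :
    IsUnit x ↔ ZMod.castHom (dvd_pow_self ℓ ha.ne') (ZMod ℓ) x ≠ 0 := by
  have hℓ : ℓ.Prime := Fact.out
  rw [← ZMod.natCast_zmod_val x, ZMod.isUnit_natCast_iff_not_dvd_pow hℓ ha, map_natCast, Ne,
    ZMod.natCast_eq_zero_iff]

theorem ZMod.pow_eq_zero_of_not_isUnit {ℓ a k : ℕ} [Fact ℓ.Prime] (ha : 0 < a) (hak : a ≤ k)
    {x : ZMod (ℓ ^ a)} (hx : ¬IsUnit x) : x ^ k = 0 := by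
  have hℓ : ℓ.Prime := Fact.out
  rw [← ZMod.natCast_zmod_val x, ZMod.isUnit_natCast_iff_not_dvd_pow hℓ ha, not_not] at hx
  rw [← ZMod.natCast_zmod_val x, ← Nat.cast_pow, ZMod.natCast_eq_zero_iff]
  exact (pow_dvd_pow ℓ hak).trans (pow_dvd_pow_of_dvd hx k)

theorem ZMod.sum_units_pow_eq_zero_of_not_dvd {ℓ a k : ℕ} [Fact ℓ.Prime] (ha : 0 < a)
    (h : ¬(ℓ - 1) ∣ k) : ∑ u : (ZMod (ℓ ^ a))ˣ, (u : ZMod (ℓ ^ a)) ^ k = 0 := by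
  have hℓ : ℓ.Prime := Fact.out
  obtain ⟨c, hc⟩ : ∃ c : (ZMod ℓ)ˣ, c ^ k ≠ 1 := by
    by_contra! hall
    apply h
    simpa [IsCyclic.exponent_eq_card, ZMod.card_units, Nat.totient_prime hℓ] using
      Monoid.exponent_dvd_of_forall_pow_eq_one hall
  obtain ⟨C, rfl⟩ := ZMod.unitsMap_surjective (dvd_pow_self ℓ ha.ne') c
  refine sum_units_pow_eq_zero_of_isUnit_pow_sub_one C ((ZMod.isUnit_iff_castHom_ne_zero ha _).2 ?_)
  rw [map_sub, map_pow, map_one, sub_ne_zero]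
  exact fun h' => hc (Units.ext (by simpa [ZMod.unitsMap] using h'))

def primeQuotientSum (n : ℕ) : ℕ := ∑ q ∈ n.primeFactors with (q - 1) ∣ n, n / q

theorem natCast_primeQuotientSum {ℓ a n : ℕ} [Fact ℓ.Prime] (ha : 0 < a) (hn : n ≠ 0)
    (h : ℓ ^ a ∣ n) :
    (primeQuotientSum n : ZMod (ℓ ^ a)) =
      if (ℓ - 1) ∣ n then ((n / ℓ : ℕ) : ZMod (ℓ ^ a)) else 0 := by
  have hℓ : ℓ.Prime := Fact.out
  have hℓn : ℓ ∈ n.primeFactors :=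
    Nat.mem_primeFactors.2 ⟨hℓ, (dvd_pow_self ℓ ha.ne').trans h, hn⟩
  rw [primeQuotientSum, sum_filter, Nat.cast_sum]
  simp only [Nat.cast_ite, Nat.cast_zero]
  refine sum_eq_single_of_mem ℓ hℓn fun q hq hqℓ => ite_eq_right_iff.2 fun _ => ?_
  have hcop : Nat.Coprime q (ℓ ^ a) :=
    Nat.Coprime.pow_right a ((Nat.coprime_primes (Nat.prime_of_mem_primeFactors hq) hℓ).2 hqℓ)
  rw [ZMod.natCast_eq_zero_iff]
  exact Nat.dvd_div_of_mul_dvd (hcop.mul_dvd_of_dvd_of_dvd (Nat.dvd_of_mem_primeFactors hq) h)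

theorem prime_pow_dvd_S_self_add_primeQuotientSum {ℓ a n : ℕ} [Fact ℓ.Prime] (ha : 0 < a)
    (hn : n ≠ 0) (h : ℓ ^ a ∣ n) : ℓ ^ a ∣ S n n + primeQuotientSum n := by
  have hℓ : ℓ.Prime := Fact.out
  have han : a ≤ n :=
    (Nat.lt_pow_self hℓ.one_lt).le.trans (Nat.le_of_dvd (Nat.pos_of_ne_zero hn) h)
  rw [← ZMod.natCast_eq_zero_iff, Nat.cast_add, natCast_S_of_dvd n h,
    sum_pow_eq_sum_units_pow (fun x hx => ZMod.pow_eq_zero_of_not_isUnit ha han hx),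
    natCast_primeQuotientSum ha hn h]
  split_ifs with hdvd
  · obtain ⟨b, rfl⟩ : ∃ b, a = b + 1 := ⟨a - 1, by omega⟩
    have hcop : Nat.Coprime (ℓ ^ b) (ℓ - 1) :=
      Nat.Coprime.pow_left b ((Nat.coprime_self_sub_right hℓ.one_le).2 (Nat.coprime_one_right ℓ))
    have htot : (ℓ ^ (b + 1)).totient ∣ n := by
      rw [Nat.totient_prime_pow_succ hℓ]
      exact hcop.mul_dvd_of_dvd_of_dvd ((pow_dvd_pow ℓ b.le_succ).trans h) hdvd
    rw [ZMod.sum_units_pow_of_totient_dvd htot, Nat.totient_prime_pow_succ hℓ]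
    obtain ⟨t, rfl⟩ := h
    rw [Nat.mul_div_cancel_left _ (pow_pos hℓ.pos _), pow_succ, mul_comm (ℓ ^ b) ℓ, mul_assoc,
      Nat.mul_div_cancel_left _ hℓ.pos, nsmul_eq_mul, ← Nat.cast_mul, ← Nat.cast_add,
      ZMod.natCast_eq_zero_iff]
    -- `(n / ℓ ^ (b + 1)) * φ(ℓ ^ (b + 1)) + n / ℓ = n` for `n = ℓ ^ (b + 1) * t`
    refine ⟨t, ?_⟩
    zify [hℓ.one_le]
    ring
  · rw [ZMod.sum_units_pow_eq_zero_of_not_dvd ha hdvd, smul_zero, add_zero]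

theorem dvd_S_self_add_primeQuotientSum {n : ℕ} (hn : n ≠ 0) :
    n ∣ S n n + primeQuotientSum n := by
  refine (Nat.dvd_iff_prime_pow_dvd_dvd _ n).2 fun ℓ a hℓ h => ?_
  have : Fact ℓ.Prime := ⟨hℓ⟩
  rcases Nat.eq_zero_or_pos a with rfl | ha
  · exact (pow_zero ℓ).symm ▸ one_dvd _
  · exact prime_pow_dvd_S_self_add_primeQuotientSum ha hn h

theorem prime_pow_dvd_add_of_dvd_add_primeQuotientSum {ℓ a n r : ℕ} (hℓ : ℓ.Prime) (ha : 0 < a)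
    (hn : n ≠ 0) (h : ℓ ^ a ∣ n) (hd : n ∣ r + primeQuotientSum n) :
    ℓ ^ a ∣ r + if (ℓ - 1) ∣ n then n / ℓ else 0 := by
  have : Fact ℓ.Prime := ⟨hℓ⟩
  rw [← ZMod.natCast_eq_zero_iff, Nat.cast_add, Nat.cast_ite, Nat.cast_zero,
    ← natCast_primeQuotientSum ha hn h, ← Nat.cast_add, ZMod.natCast_eq_zero_iff]
  exact h.trans hd

theorem sub_one_dvd_of_dvd_add_primeQuotientSum {p n q : ℕ} (hp : p.Prime) (hn : n ≠ 0)
    (hd : n ∣ p + primeQuotientSum n) (hq : q.Prime) (hqn : q ∣ n) (hqp : q ≠ p) :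
    (q - 1) ∣ n := by
  by_contra hq1
  have h := prime_pow_dvd_add_of_dvd_add_primeQuotientSum hq one_pos hn (by rwa [pow_one]) hd
  rw [pow_one, if_neg hq1, add_zero, Nat.prime_dvd_prime_iff_eq hq hp] at h
  exact hqp h

theorem squarefree_of_dvd_add_primeQuotientSum {p n : ℕ} (hp : p.Prime) (hn : n ≠ 0)
    (hd : n ∣ p + primeQuotientSum n) (hpn : ¬p ∣ n) : Squarefree n := by
  refine Nat.squarefree_iff_prime_squarefree.2 fun q hq hqq => ?_
  have hqn : q ∣ n := dvd_of_mul_right_dvd hqq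
  have hqp : q ≠ p := by rintro rfl; exact hpn hqn
  have h := prime_pow_dvd_add_of_dvd_add_primeQuotientSum hq two_pos hn (by rwa [sq]) hd
  rw [if_pos (sub_one_dvd_of_dvd_add_primeQuotientSum hp hn hd hq hqn hqp)] at h
  have hqp' : q ∣ p :=
    (Nat.dvd_add_left (Nat.dvd_div_of_mul_dvd hqq)).1 ((dvd_pow_self q two_ne_zero).trans h)
  exact hqp ((Nat.prime_dvd_prime_iff_eq hq hp).1 hqp')

theorem primeFactors_filter_sub_one_dvd_eq {p m : ℕ} (hp : p.Prime) (hm : m ≠ 0)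
    (hd : p * m ∣ p + primeQuotientSum (p * m)) :
    {q ∈ (p * m).primeFactors | (q - 1) ∣ p * m} = m.primeFactors := by
  have hn : p * m ≠ 0 := mul_ne_zero hp.ne_zero hm
  ext q
  simp only [mem_filter, Nat.mem_primeFactors, ne_eq, hn, hm, not_false_eq_true, and_true]
  by_cases hqp : q = p
  · subst hqp
    constructor
    · rintro ⟨⟨hq, -⟩, hq1⟩
      have h := prime_pow_dvd_add_of_dvd_add_primeQuotientSum hq one_pos hn (by simp) hd
      rw [if_pos hq1, pow_one, Nat.mul_div_cancel_left m hq.pos] at h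
      exact ⟨hq, (Nat.dvd_add_right dvd_rfl).1 h⟩
    · rintro ⟨hq, hqm⟩
      refine ⟨⟨hq, dvd_mul_right q m⟩, by_contra fun hq1 => ?_⟩
      have h := prime_pow_dvd_add_of_dvd_add_primeQuotientSum hq two_pos hn
        (by rw [sq]; exact mul_dvd_mul_left q hqm) hd
      rw [if_neg hq1, add_zero] at h
      exact absurd (Nat.le_of_dvd hq.pos h) (by nlinarith [hq.two_le])
  · constructor
    · rintro ⟨⟨hq, hqn⟩, -⟩
      exact ⟨hq, ((Nat.coprime_primes hq hp).2 hqp).dvd_of_dvd_mul_left hqn⟩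
    · rintro ⟨hq, hqm⟩
      have hqn : q ∣ p * m := dvd_mul_of_dvd_right hqm p
      exact ⟨⟨hq, hqn⟩, sub_one_dvd_of_dvd_add_primeQuotientSum hp hn hd hq hqn hqp⟩

theorem mem_W_of_dvd_add_primeQuotientSum {p m : ℕ} (hp : p.Prime) (hm : m ≠ 0)
    (hd : p * m ∣ p + primeQuotientSum (p * m)) : m ∈ W := by
  have hsum : primeQuotientSum (p * m) = p * ∑ q ∈ m.primeFactors, m / q := by
    rw [primeQuotientSum, primeFactors_filter_sub_one_dvd_eq hp hm hd, mul_sum]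
    exact sum_congr rfl fun q hq => Nat.mul_div_assoc p (Nat.dvd_of_mem_primeFactors hq)
  rw [hsum, add_comm, ← mul_add_one] at hd
  exact ⟨Nat.pos_of_ne_zero hm, Nat.dvd_of_mul_dvd_mul_left hp.pos hd⟩

theorem Squarefree.dvd_prod_of_primeFactors_subset {n : ℕ} {s : Finset ℕ} (hn : Squarefree n)
    (h : n.primeFactors ⊆ s) : n ∣ ∏ q ∈ s, q :=
  Nat.prod_primeFactors_of_squarefree hn ▸ prod_dvd_prod_of_subset _ _ id h

theorem prime_mem_of_squarefree_of_sub_one_dvd {n : ℕ} (hn : Squarefree n)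
    (h : ∀ q, q.Prime → q ∣ n → (q - 1) ∣ n) {q : ℕ} (hq : q.Prime) (hqn : q ∣ n) :
    q ∈ ({2, 3, 7, 43} : Finset ℕ) := by
  induction q using Nat.strong_induction_on with
  | _ q ih =>
    have hq1 : (q - 1) ∣ n := h q hq hqn
    have hsub : (q - 1).primeFactors ⊆ {2, 3, 7, 43} := fun r hr =>
      ih r ((Nat.le_of_mem_primeFactors hr).trans_lt (Nat.sub_lt hq.pos one_pos))
        (Nat.prime_of_mem_primeFactors hr) ((Nat.dvd_of_mem_primeFactors hr).trans hq1)
    have hdiv : q - 1 ∈ Nat.divisors 1806 := Nat.mem_divisors.2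
      ⟨(hn.squarefree_of_dvd hq1).dvd_prod_of_primeFactors_subset hsub, by norm_num⟩
    have key : ∀ d ∈ Nat.divisors 1806, (d + 1).Prime →
        d + 1 ∈ ({2, 3, 7, 43} : Finset ℕ) := by
      decide +kernel
    simpa [Nat.sub_add_cancel hq.one_le] using key _ hdiv (by rwa [Nat.sub_add_cancel hq.one_le])

theorem mem_of_squarefree_of_sub_one_dvd {n : ℕ} (hn : Squarefree n)
    (h : ∀ q, q.Prime → q ∣ n → (q - 1) ∣ n) : n ∈ ({1, 2, 6, 42, 1806} : Set ℕ) := by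
  have hdiv : n ∈ Nat.divisors 1806 := Nat.mem_divisors.2 ⟨hn.dvd_prod_of_primeFactors_subset
    fun q hq => prime_mem_of_squarefree_of_sub_one_dvd hn h (Nat.prime_of_mem_primeFactors hq)
      (Nat.dvd_of_mem_primeFactors hq), by norm_num⟩
  have key : ∀ n ∈ Nat.divisors 1806, (∀ q ∈ n.primeFactors, (q - 1) ∣ n) →
      n ∈ ({1, 2, 6, 42, 1806} : Finset ℕ) := by
    decide +kernel
  simpa using key n hdiv fun q hq =>
    h q (Nat.prime_of_mem_primeFactors hq) (Nat.dvd_of_mem_primeFactors hq)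

/-- For every prime `p`, `M_p ⊆ M_1 ∪ p·𝒲` where `M_1 = {1, 2, 6, 42, 1806}`. -/
theorem stmt_13 (p : ℕ) (hp : p.Prime) :
    {n : ℕ | 0 < n ∧ S n n ≡ p [MOD n]} ⊆
      ({1, 2, 6, 42, 1806} : Set ℕ) ∪ (fun x => p * x) '' W := by
  rintro n ⟨hn, hmod⟩
  have hd : n ∣ p + primeQuotientSum n :=
    ((hmod.add_right _).dvd_iff dvd_rfl).1 (dvd_S_self_add_primeQuotientSum hn.ne')
  by_cases hpn : p ∣ n
  · obtain ⟨m, rfl⟩ := hpn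
    exact Or.inr ⟨m, mem_W_of_dvd_add_primeQuotientSum hp (right_ne_zero_of_mul hn.ne') hd, rfl⟩
  · exact Or.inl (mem_of_squarefree_of_sub_one_dvd
      (squarefree_of_dvd_add_primeQuotientSum hp hn.ne' hd hpn) fun q hq hqn =>
        sub_one_dvd_of_dvd_add_primeQuotientSum hp hn.ne' hd hq hqn (by rintro rfl; exact hpn hqn))
end
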